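/- Let n, k ∈ ℕ with k < n, let x₁ < … < x_k be real numbers, let x_{k+1}, …, x_{n+1} be real numbers distinct from each other and from x₁, …, x_k, and let f be a real function defined at all these points. Then the determinant of the (n−k+1)×(n−k+1) matrix whose columns are indexed by j ∈ {k+1, …, n+1}, whose rows i ∈ {k, …, n−1} have entries [x₁, …, x_k, x_j; p_i] (classical divided differences of the power functions p_i(x) = x^i), and whose last row has entries [x₁, …, x_k, x_j; f], equals the determinant of the matrix whose first n−k rows have entries x_j^{m} for m ∈ {0, 1, …, n−k−1} and whose last row has entries [x₁, …, x_k, x_j; f]. -/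

import Mathlib

/-- `Φ_ω(x₁,…,x_m) = det(ω_i(x_j))`. -/
noncomputable def Phi {m : ℕ} (ω : Fin m → ℝ → ℝ) (x : Fin m → ℝ) : ℝ :=
  Matrix.det (Matrix.of fun i j => ω i (x j))

/-- `ω` is an `m`-dimensional positive Chebyshev system over `H`. -/
def IsPosChebyshev {m : ℕ} (ω : Fin m → ℝ → ℝ) (H : Set ℝ) : Prop :=
  ∀ x : Fin m → ℝ, (∀ i, x i ∈ H) → StrictMono x → 0 < Phi ω x

/-- `f` is convex with respect to the `m`-dimensional system `ω` on `S`. -/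
def IsConvexWRT {m : ℕ} (ω : Fin m → ℝ → ℝ) (S : Set ℝ) (f : ℝ → ℝ) : Prop :=
  ∀ x : Fin (m + 1) → ℝ, (∀ i, x i ∈ S) → StrictMono x → 0 ≤ Phi (Fin.snoc ω f) x

/-- The generalized divided difference `[x₁,…,x_k; f]_{ω⟨k⟩}`:
the numerator replaces the last function `ω_k` by `f`. -/
noncomputable def divDiff {k : ℕ} (ω : Fin k → ℝ → ℝ) (f : ℝ → ℝ) (x : Fin k → ℝ) : ℝ :=
  Phi (fun i => if (i : ℕ) + 1 = k then f else ω i) x / Phi ω x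

/-!
Let `W = ∏ₐ (X - yₐ)` be the nodal polynomial of `y₁,…,y_k` and `X^(k+i) = W·Qᵢ + Rᵢ` with
`deg Rᵢ < k`. On the nodes `y₁,…,y_k,t` the power `s^(k+i)` agrees with the polynomial
`Rᵢ + Qᵢ(t)·W` of degree `≤ k`, so `[y₁,…,y_k,t; p_(k+i)] = Qᵢ(t)`, where `Qᵢ` is monic of
degree `i`. Expanding both determinants along their common last row, every minor is then a
Vandermonde-type determinant in which the monic `Qᵢ` may be replaced by the monomials `Xⁱ`.
-/

open Polynomial Matrix Finset

lemma Polynomial.Monic.divByMonic {R : Type*} [CommRing R] {p q : R[X]} (hp : p.Monic)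
    (hq : q.Monic) (h : q.degree ≤ p.degree) : (p /ₘ q).Monic :=
  (leadingCoeff_divByMonic_of_monic hq h).trans hp.leadingCoeff

section PowDivByMonic

variable {R : Type*} [CommRing R] [Nontrivial R] {W : R[X]} {k : ℕ}

lemma natDegree_X_pow_add_divByMonic (hW : W.Monic) (hk : W.natDegree = k) (i : ℕ) :
    (X ^ (k + i) /ₘ W).natDegree = i := by
  rw [natDegree_divByMonic _ hW, natDegree_X_pow, hk, Nat.add_sub_cancel_left]

lemma monic_X_pow_add_divByMonic (hW : W.Monic) (hk : W.natDegree = k) (i : ℕ) :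
    (X ^ (k + i) /ₘ W).Monic :=
  (monic_X_pow _).divByMonic hW <| by
    rw [degree_X_pow, degree_eq_natDegree hW.ne_zero, hk]
    exact_mod_cast k.le_add_right i

end PowDivByMonic

lemma Phi_pow_eq_det_vandermonde {k : ℕ} (y : Fin k → ℝ) :
    Phi (fun t : Fin k => fun s : ℝ => s ^ (t : ℕ)) y = (vandermonde y).det := by
  rw [Phi, ← det_transpose]
  rfl

lemma divDiff_pow_eq_coeff {k : ℕ} {y : Fin (k + 1) → ℝ} (hy : Function.Injective y)
    {P : ℝ[X]} (hP : P.natDegree ≤ k) {f : ℝ → ℝ} (hf : ∀ a, f (y a) = P.eval (y a)) :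
    divDiff (fun t : Fin (k + 1) => fun s : ℝ => s ^ (t : ℕ)) f y = P.coeff k := by
  have hV : (vandermonde y).det ≠ 0 := det_vandermonde_ne_zero_iff.mpr hy
  have hrow : (fun j => f (y j)) = ∑ r : Fin (k + 1), P.coeff r • (vandermonde y)ᵀ r := by
    ext j
    simp [hf, eval_eq_sum_range' (Nat.lt_succ_of_le hP), ← Fin.sum_univ_eq_sum_range, mul_comm]
  have hnum :
      Phi (fun i : Fin (k + 1) => if (i : ℕ) + 1 = k + 1 then f else fun s => s ^ (i : ℕ)) y
      = ((vandermonde y)ᵀ.updateRow (Fin.last k) fun j => f (y j)).det := by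
    rw [Phi]
    congr 1
    ext i j
    rcases Fin.eq_castSucc_or_eq_last i with ⟨i, rfl⟩ | rfl
    · simp [i.isLt.ne]
    · simp
  rw [divDiff, hnum, hrow, det_updateRow_sum, Phi_pow_eq_det_vandermonde, det_transpose,
    Fin.val_last, smul_eq_mul, mul_div_cancel_right₀ _ hV]

lemma divDiff_pow_snoc_eq_eval_divByMonic {k : ℕ} (i : ℕ) {y : Fin k → ℝ} {t : ℝ}
    (hy : Function.Injective (Fin.snoc y t : Fin (k + 1) → ℝ)) :
    divDiff (fun r : Fin (k + 1) => fun s : ℝ => s ^ (r : ℕ)) (fun s => s ^ (k + i))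
      (Fin.snoc y t) = (X ^ (k + i) /ₘ Lagrange.nodal univ y).eval t := by
  set W := Lagrange.nodal univ y
  have hW : W.Monic := Lagrange.nodal_monic
  have hWdeg : W.natDegree = k := by simp [W, Lagrange.natDegree_nodal]
  set Q := X ^ (k + i) /ₘ W
  set Rem := X ^ (k + i) %ₘ W
  have hRem : Rem.degree < k := by
    rw [← hWdeg, ← degree_eq_natDegree hW.ne_zero]
    exact degree_modByMonic_lt _ hW
  have hsplit (s : ℝ) : s ^ (k + i) = Rem.eval s + W.eval s * Q.eval s := by
    simpa using congrArg (eval s) (modByMonic_add_div (X ^ (k + i)) W).symm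
  have hinterp : ∀ a, (Fin.snoc y t : Fin (k + 1) → ℝ) a ^ (k + i)
      = (Rem + C (Q.eval t) * W).eval ((Fin.snoc y t : Fin (k + 1) → ℝ) a) := by
    refine Fin.lastCases ?_ fun a => ?_
    · simp [hsplit, mul_comm]
    · simp [hsplit, W, Lagrange.eval_nodal_at_node]
  rw [divDiff_pow_eq_coeff (f := fun s => s ^ (k + i)) hy ?_ hinterp]
  · rw [coeff_add, coeff_eq_zero_of_degree_lt hRem, coeff_C_mul, ← hWdeg, hW.coeff_natDegree]
    ring
  · exact (natDegree_add_le _ _).trans <| max_le (natDegree_le_of_degree_le hRem.le)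
      ((natDegree_C_mul_le _ _).trans hWdeg.le)

lemma det_eq_det_of_rows_eval_monic {R : Type*} [CommRing R] {m : ℕ}
    {A B : Matrix (Fin (m + 1)) (Fin (m + 1)) R} (p : Fin m → R[X])
    (h_deg : ∀ i, (p i).natDegree = i) (h_monic : ∀ i, (p i).Monic) (t : Fin (m + 1) → R)
    (hA : ∀ i j, A i.castSucc j = (p i).eval (t j))
    (hB : ∀ (i : Fin m) j, B i.castSucc j = t j ^ (i : ℕ))
    (hlast : ∀ j, A (Fin.last m) j = B (Fin.last m) j) :
    A.det = B.det := by
  rw [det_succ_row _ (Fin.last m), det_succ_row _ (Fin.last m)]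
  refine sum_congr rfl fun j _ => ?_
  have hminorA : det (A.submatrix (Fin.last m).succAbove j.succAbove)
      = det (vandermonde (t ∘ j.succAbove)) := by
    rw [det_eval_matrixOfPolynomials_eq_det_vandermonde _ p h_deg h_monic, ← det_transpose]
    congr 1
    ext i j'
    simp [hA]
  have hminorB : det (B.submatrix (Fin.last m).succAbove j.succAbove)
      = det (vandermonde (t ∘ j.succAbove)) := by
    rw [← det_transpose]
    congr 1
    ext i j'
    simp [hB]
  rw [hlast, hminorA, hminorB]

lemma Fin.snoc_castLE_injective {α : Type*} {n k : ℕ} {x : Fin n → α}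
    (hx : Function.Injective x) (hkn : k ≤ n) {a : Fin n} (ha : k ≤ a) :
    Function.Injective
      (Fin.snoc (fun t : Fin k => x (Fin.castLE hkn t)) (x a) : Fin (k + 1) → α) := by
  change Function.Injective (Fin.snoc (x ∘ Fin.castLE hkn) (x a) : Fin (k + 1) → α)
  rw [← Fin.comp_snoc]
  refine hx.comp <| Fin.snoc_injective_of_injective (Fin.castLE_injective _) ?_
  rintro ⟨t, rfl⟩
  exact absurd ha (by simp)

/-- The determinant reduction in the proof of Corollary 2: the determinant whose rows
`i ∈ {k,…,n-1}` consist of the classical divided differences `[x₁,…,x_k,x_j; p_i]` of the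
power functions and whose last row consists of `[x₁,…,x_k,x_j; f]` (columns
`j ∈ {k+1,…,n+1}`) equals the determinant whose first `n-k` rows are the powers `x_j^m`,
`m ∈ {0,…,n-k-1}`, with the same last row. -/
theorem divided_difference_determinant_reduction (n k : ℕ) (hk : k < n)
    (x : Fin (n + 1) → ℝ) (hinj : Function.Injective x)
    (f : ℝ → ℝ) :
    Matrix.det (Matrix.of fun i j : Fin (n - k + 1) =>
      if h : (i : ℕ) < n - k then
        divDiff (fun t : Fin (k + 1) => fun s : ℝ => s ^ (t : ℕ))
          (fun s : ℝ => s ^ (k + (i : ℕ)))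
          (Fin.snoc (fun t : Fin k => x (Fin.castLE (by omega) t))
            (x ⟨k + (j : ℕ), by have := j.isLt; omega⟩))
      else
        divDiff (fun t : Fin (k + 1) => fun s : ℝ => s ^ (t : ℕ)) f
          (Fin.snoc (fun t : Fin k => x (Fin.castLE (by omega) t))
            (x ⟨k + (j : ℕ), by have := j.isLt; omega⟩)))
    = Matrix.det (Matrix.of fun i j : Fin (n - k + 1) =>
      if h : (i : ℕ) < n - k then
        (x ⟨k + (j : ℕ), by have := j.isLt; omega⟩) ^ (i : ℕ)
      else
        divDiff (fun t : Fin (k + 1) => fun s : ℝ => s ^ (t : ℕ)) f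
          (Fin.snoc (fun t : Fin k => x (Fin.castLE (by omega) t))
            (x ⟨k + (j : ℕ), by have := j.isLt; omega⟩))) := by
  have hW := Lagrange.nodal_monic (s := univ) (v := fun t : Fin k => x (Fin.castLE (by omega) t))
  have hWdeg :
      (Lagrange.nodal univ fun t : Fin k => x (Fin.castLE (by omega) t)).natDegree = k := by
    simp [Lagrange.natDegree_nodal]
  refine det_eq_det_of_rows_eval_monic _ (fun i => natDegree_X_pow_add_divByMonic hW hWdeg i)
    (fun i => monic_X_pow_add_divByMonic hW hWdeg i) (fun j => x ⟨k + j, by omega⟩)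
    (fun i j => ?_) (fun i j => by simp) (fun j => by simp)
  simpa using divDiff_pow_snoc_eq_eval_divByMonic i (Fin.snoc_castLE_injective hinj _ (by simp))
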